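/- arXiv:2006.13984 — 2 statements merged into one kernel-verified Lean document; each statement's English description precedes it below -/
import Mathlib

section
/- If X is a binomial random variable with parameters n and p, and k ≥ np, then P(X ≥ k) ≤ exp(-np·H(k/(np))), where H(x) = 1 - x + x·log(x) for x > 0 and H(0) = 1. -/
open Finset Real

/-- `H(x) = 1 - x + x log x` (note `Real.log 0 = 0`, so `H 0 = 1` automatically). -/
noncomputable def H (x : ℝ) : ℝ := 1 - x + x * Real.log x

/-- Markov's inequality for `exp (t X)`. -/
lemma sum_ite_le_exp_mul_sum_mul_exp {ι : Type*} (s : Finset ι) (w x : ι → ℝ)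
    (hw : ∀ i ∈ s, 0 ≤ w i) (k : ℝ) {t : ℝ} (ht : 0 ≤ t) :
    (∑ i ∈ s, if k ≤ x i then w i else 0) ≤ exp (-(t * k)) * ∑ i ∈ s, w i * exp (t * x i) := by
  rw [mul_sum]
  refine sum_le_sum fun i hi => ?_
  have hexp : exp (-(t * k)) * (w i * exp (t * x i)) = w i * exp (t * (x i - k)) := by
    rw [mul_left_comm, ← exp_add]
    ring_nf
  rw [hexp]
  split_ifs with hki
  · exact le_mul_of_one_le_right (hw i hi) (one_le_exp (mul_nonneg ht (by linarith)))
  · exact mul_nonneg (hw i hi) (exp_nonneg _)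

lemma sum_choose_mul_pow_mul_exp (n : ℕ) (p t : ℝ) :
    ∑ i ∈ range (n + 1), (n.choose i : ℝ) * p ^ i * (1 - p) ^ (n - i) * exp (t * i)
      = (p * exp t + (1 - p)) ^ n := by
  rw [add_pow]
  refine sum_congr rfl fun i _ => ?_
  rw [mul_pow, ← exp_nat_mul, mul_comm t]
  ring

lemma one_add_pow_le_exp_mul {x : ℝ} (hx : -1 ≤ x) (n : ℕ) : (1 + x) ^ n ≤ exp (n * x) := by
  rw [exp_nat_mul]
  exact pow_le_pow_left₀ (by linarith) (by linarith [add_one_le_exp x]) n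

lemma binomial_tail_le_exp (n : ℕ) {p : ℝ} (hp0 : 0 ≤ p) (hp1 : p ≤ 1) (k : ℝ) {t : ℝ}
    (ht : 0 ≤ t) :
    (∑ i ∈ range (n + 1), if k ≤ (i : ℝ) then (n.choose i : ℝ) * p ^ i * (1 - p) ^ (n - i) else 0)
      ≤ exp (n * p * (exp t - 1) - t * k) :=
  calc _ ≤ exp (-(t * k)) * ∑ i ∈ range (n + 1),
          (n.choose i : ℝ) * p ^ i * (1 - p) ^ (n - i) * exp (t * i) :=
        sum_ite_le_exp_mul_sum_mul_exp _ _ _ (fun i _ => by bound) k ht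
    _ = exp (-(t * k)) * (1 + p * (exp t - 1)) ^ n := by
        rw [sum_choose_mul_pow_mul_exp]
        ring_nf
    _ ≤ exp (-(t * k)) * exp (n * (p * (exp t - 1))) := by
        gcongr
        exact one_add_pow_le_exp_mul (by nlinarith [one_le_exp ht]) n
    _ = exp (n * p * (exp t - 1) - t * k) := by
        rw [← exp_add]
        ring_nf

lemma mul_div_sub_one_sub_log_div_mul_eq {μ : ℝ} (hμ : μ ≠ 0) (k : ℝ) :
    μ * (k / μ - 1) - log (k / μ) * k = -μ * H (k / μ) := by
  rw [H]
  field_simp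
  ring

/-- Chernoff upper-tail bound for a binomial random variable `X ~ Bi(n, p)`:
if `k ≥ np` then `P(X ≥ k) ≤ exp(-np · H(k/(np)))`. -/
theorem binomial_upper_tail_chernoff (n : ℕ) (p : ℝ) (hp0 : 0 ≤ p) (hp1 : p ≤ 1)
    (k : ℝ) (hk : (n : ℝ) * p ≤ k) :
    (∑ i ∈ Finset.range (n + 1),
        if k ≤ (i : ℝ) then (n.choose i : ℝ) * p ^ i * (1 - p) ^ (n - i) else 0)
      ≤ Real.exp (-((n : ℝ) * p) * H (k / ((n : ℝ) * p))) := by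
  rcases (by positivity : (0 : ℝ) ≤ n * p).eq_or_lt with hμ | hμ
  · simpa [← hμ] using binomial_tail_le_exp n hp0 hp1 k le_rfl
  · -- the optimal parameter of the Chernoff bound is `t = log (k / np)`
    have hkμ : 1 ≤ k / (n * p) := (one_le_div hμ).2 hk
    have hbound := binomial_tail_le_exp n hp0 hp1 k (log_nonneg hkμ)
    rwa [exp_log (by linarith), mul_div_sub_one_sub_log_div_mul_eq hμ.ne'] at hbound
end

section
/- There exists a constant C > 0 depending only on Ω and d such that if the radii r_n satisfy n·q_min·r_n^d ≥ C·log n for all n, then almost surely there exists n₀ ∈ ℕ such that for all n ≥ n₀, Ω is covered by the union of balls B(x, r_n) over x ∈ X_n. -/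
/-!
A maximal `ρ/2`-separated subset of `Ω` is a `ρ/2`-net, and since the balls of radius `ρ/4` around
its points are disjoint and each has volume at least `c₀ (ρ/4)^d` inside `Ω`, the net has at most
`|Ω| / (c₀ (ρ/4)^d)` points. If the balls `B(X_i, ρ)`, `i < n`, miss a point of `Ω`, then some ball
`B(y, ρ/2)` around a net point contains no sample, an event of probability
`(1 - ν B(y, ρ/2))^n ≤ exp(-n q_min c₀ (ρ/2)^d)`. For `ρ = r_n` and `C = 3·2^d/c₀` this is at most
`n^{-3}`, against a net of `O(n)` points; capping `ρ` at `2 r₀`, where the regularity bound stops,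
only adds a geometric term. The failure probabilities are therefore summable, and Borel–Cantelli
concludes.
-/

open MeasureTheory ProbabilityTheory Filter Metric ENNReal NNReal Function

section Packing

variable {E : Type*} [PseudoMetricSpace E] [MeasurableSpace E] [OpensMeasurableSpace E]
  {μ : Measure E} {Ω : Set E} {ε : ℝ≥0} {m : ℝ≥0∞}

theorem Metric.IsSeparated.encard_mul_le_measure {C : Set E} (hC : IsSeparated ε C)
    (hCΩ : C ⊆ Ω) (hΩ : MeasurableSet Ω) (hvol : ∀ x ∈ Ω, m ≤ μ (ball x (ε / 2) ∩ Ω)) :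
    (C.encard : ℝ≥0∞) * m ≤ μ Ω := by
  have hdisj : Pairwise (Disjoint on fun x : C => ball (x : E) (ε / 2) ∩ Ω) := by
    intro x y hxy
    have hsep : (ε : ℝ) < dist (x : E) y := by
      have : (ε : ℝ≥0∞) < edist (x : E) y := hC x.2 y.2 (Subtype.coe_injective.ne hxy)
      rw [edist_dist, ← ENNReal.ofReal_coe_nnreal] at this
      exact (ENNReal.ofReal_lt_ofReal_iff_of_nonneg ε.2).1 this
    exact (ball_disjoint_ball (by linarith)).mono Set.inter_subset_left Set.inter_subset_left
  calc (C.encard : ℝ≥0∞) * m = ∑' _ : C, m := (ENNReal.tsum_set_const C m).symm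
    _ ≤ ∑' x : C, μ (ball (x : E) (ε / 2) ∩ Ω) :=
      ENNReal.tsum_le_tsum fun x => hvol x (hCΩ x.2)
    _ ≤ μ (⋃ x : C, ball (x : E) (ε / 2) ∩ Ω) :=
      tsum_meas_le_meas_iUnion_of_disjoint μ (fun _ => measurableSet_ball.inter hΩ) hdisj
    _ ≤ μ Ω := measure_mono (Set.iUnion_subset fun _ => Set.inter_subset_right)

theorem Metric.packingNumber_mul_le_measure (hΩ : MeasurableSet Ω)
    (hvol : ∀ x ∈ Ω, m ≤ μ (ball x (ε / 2) ∩ Ω)) : (packingNumber ε Ω : ℝ≥0∞) * m ≤ μ Ω := by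
  simp only [packingNumber, ENat.toENNReal_iSup, ENNReal.iSup_mul, iSup_le_iff]
  exact fun C hCΩ hC => hC.encard_mul_le_measure hCΩ hΩ hvol

theorem exists_finite_cover_encard_mul_le_measure (hΩ : MeasurableSet Ω) (hμΩ : μ Ω ≠ ∞)
    (hm : m ≠ 0) (hvol : ∀ x ∈ Ω, m ≤ μ (ball x (ε / 2) ∩ Ω)) :
    ∃ T ⊆ Ω, T.Finite ∧ Ω ⊆ ⋃ y ∈ T, closedBall y ε ∧ (T.encard : ℝ≥0∞) * m ≤ μ Ω := by
  have hpack := packingNumber_mul_le_measure hΩ hvol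
  have hfin : packingNumber ε Ω ≠ ⊤ := by
    rintro htop
    rw [htop, ENat.toENNReal_top, ENNReal.top_mul hm] at hpack
    exact hμΩ (top_le_iff.1 hpack)
  refine ⟨maximalSeparatedSet ε Ω, maximalSeparatedSet_subset, ?_,
    isCover_iff_subset_iUnion_closedBall.1 (isCover_maximalSeparatedSet hfin), ?_⟩
  · rw [← Set.encard_ne_top_iff, encard_maximalSeparatedSet hfin]
    exact hfin
  · rwa [encard_maximalSeparatedSet hfin]

end Packing

theorem MeasureTheory.mul_measure_inter_le_withDensity_apply {E : Type*} [MeasurableSpace E]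
    {μ : Measure E} {s t : Set E} (hs : MeasurableSet s) (ht : MeasurableSet t) {g : E → ℝ≥0∞}
    {a : ℝ≥0∞} (ha : ∀ x ∈ s, a ≤ g x) : a * μ (t ∩ s) ≤ μ.withDensity g t := by
  rw [withDensity_apply _ ht, ← setLIntegral_const]
  calc ∫⁻ _ in t ∩ s, a ∂μ ≤ ∫⁻ x in t ∩ s, g x ∂μ :=
        setLIntegral_mono' (ht.inter hs) fun x hx => ha x hx.2
    _ ≤ ∫⁻ x in t, g x ∂μ := lintegral_mono_set Set.inter_subset_left

theorem MeasureTheory.ae_eventually_notMem_of_summable {α : Type*} [MeasurableSpace α]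
    {μ : Measure α} {s : ℕ → Set α} {f : ℕ → ℝ} (hf : Summable f) {k : ℕ}
    (hs : ∀ n ≥ k, μ (s n) ≤ ENNReal.ofReal (f n)) : ∀ᵐ x ∂μ, ∀ᶠ n in atTop, x ∉ s n := by
  have hsum : ∑' n, μ (s (n + k)) ≠ ∞ :=
    ne_top_of_le_ne_top
      (ENNReal.tsum_coe_ne_top_iff_summable.2 ((_root_.summable_nat_add_iff k).2 hf).toNNReal)
      (ENNReal.tsum_le_tsum fun n => hs (n + k) (Nat.le_add_left k n))
  filter_upwards [ae_eventually_notMem hsum] with x hx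
  rwa [← map_add_atTop_eq_nat k]

theorem one_sub_pow_le_ofReal_exp {p : ℝ≥0∞} {t : ℝ} (ht0 : 0 ≤ t) (ht : ENNReal.ofReal t ≤ p)
    (n : ℕ) : (1 - p) ^ n ≤ ENNReal.ofReal (Real.exp (-(n * t))) := by
  calc (1 - p) ^ n ≤ ENNReal.ofReal (1 - t) ^ n := by
        gcongr
        rw [ENNReal.ofReal_sub _ ht0, ENNReal.ofReal_one]
        exact tsub_le_tsub_left ht 1
    _ ≤ ENNReal.ofReal (Real.exp (-t)) ^ n := by
        gcongr
        linarith [Real.add_one_le_exp (-t)]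
    _ = ENNReal.ofReal (Real.exp (-(n * t))) := by
        rw [← ENNReal.ofReal_pow (Real.exp_nonneg _), ← Real.exp_nat_mul, mul_neg]

section Sampling

variable {α E : Type*} [MeasurableSpace α] [MeasurableSpace E] {P : Measure α} {ν : Measure E}
  [IsProbabilityMeasure ν] {X : ℕ → α → E}

theorem ProbabilityTheory.iIndepFun.measure_iInter_preimage_compl (hX : ∀ i, Measurable (X i))
    (hind : iIndepFun X P) (hmap : ∀ i, P.map (X i) = ν) {S : Set E} (hS : MeasurableSet S)
    (n : ℕ) : P (⋂ i ∈ Finset.range n, X i ⁻¹' Sᶜ) = (1 - ν S) ^ n := by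
  rw [hind.measure_inter_preimage_eq_mul _ fun _ _ => hS.compl]
  simp_rw [← Measure.map_apply (hX _) hS.compl, hmap, prob_compl_eq_one_sub hS]
  rw [Finset.prod_const, Finset.card_range]

end Sampling

section Covering

variable {α E : Type*} [MeasurableSpace α] [PseudoMetricSpace E] [MeasurableSpace E]
  [OpensMeasurableSpace E] {P : Measure α} {ν : Measure E} [IsProbabilityMeasure ν]
  {X : ℕ → α → E}

theorem measure_not_covered_le_encard_mul (hX : ∀ i, Measurable (X i)) (hind : iIndepFun X P)
    (hmap : ∀ i, P.map (X i) = ν) {Ω T : Set E} (hT : T.Countable) {ε : ℝ}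
    (hcov : Ω ⊆ ⋃ y ∈ T, closedBall y ε) {p : ℝ≥0∞} (hp : ∀ y ∈ T, p ≤ ν (ball y ε)) (n : ℕ) :
    P {ω | ¬ Ω ⊆ ⋃ i ∈ Finset.range n, ball (X i ω) (2 * ε)} ≤ T.encard * (1 - p) ^ n := by
  have hsub : {ω | ¬ Ω ⊆ ⋃ i ∈ Finset.range n, ball (X i ω) (2 * ε)} ⊆
      ⋃ y ∈ T, ⋂ i ∈ Finset.range n, X i ⁻¹' (ball y ε)ᶜ := by
    intro ω hω
    by_contra hhit
    simp only [Set.mem_iUnion, Set.mem_iInter, Set.mem_preimage, Set.mem_compl_iff, not_exists,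
      not_forall, not_not] at hhit
    refine hω fun x hx => ?_
    obtain ⟨y, hyT, hxy⟩ := Set.mem_iUnion₂.1 (hcov hx)
    obtain ⟨i, hi, hXi⟩ := hhit y hyT
    refine Set.mem_biUnion hi (mem_ball.2 ?_)
    linarith [dist_triangle_right x (X i ω) y, mem_closedBall.1 hxy, mem_ball.1 hXi]
  calc P {ω | ¬ Ω ⊆ ⋃ i ∈ Finset.range n, ball (X i ω) (2 * ε)}
      ≤ P (⋃ y ∈ T, ⋂ i ∈ Finset.range n, X i ⁻¹' (ball y ε)ᶜ) := measure_mono hsub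
    _ ≤ ∑' y : T, P (⋂ i ∈ Finset.range n, X i ⁻¹' (ball (y : E) ε)ᶜ) :=
      measure_biUnion_le P hT _
    _ ≤ ∑' _ : T, (1 - p) ^ n := ENNReal.tsum_le_tsum fun y => by
      rw [hind.measure_iInter_preimage_compl hX hmap measurableSet_ball]
      gcongr
      exact hp y y.2
    _ = T.encard * (1 - p) ^ n := ENNReal.tsum_set_const T _

theorem measure_not_covered_le_measure_div_mul (hX : ∀ i, Measurable (X i))
    (hind : iIndepFun X P) (hmap : ∀ i, P.map (X i) = ν) {μ : Measure E} {Ω : Set E}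
    (hΩ : MeasurableSet Ω) (hμΩ : μ Ω ≠ ∞) {ε : ℝ≥0} {m : ℝ≥0∞} (hm : m ≠ 0)
    (hvol : ∀ x ∈ Ω, m ≤ μ (ball x (ε / 2) ∩ Ω)) {p : ℝ≥0∞} (hp : ∀ y ∈ Ω, p ≤ ν (ball y ε))
    (n : ℕ) :
    P {ω | ¬ Ω ⊆ ⋃ i ∈ Finset.range n, ball (X i ω) (2 * ε)} ≤ μ Ω / m * (1 - p) ^ n := by
  obtain ⟨T, hTΩ, hT, hcov, hcard⟩ := exists_finite_cover_encard_mul_le_measure hΩ hμΩ hm hvol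
  calc P {ω | ¬ Ω ⊆ ⋃ i ∈ Finset.range n, ball (X i ω) (2 * ε)}
      ≤ T.encard * (1 - p) ^ n :=
        measure_not_covered_le_encard_mul hX hind hmap hT.countable hcov
          (fun y hy => hp y (hTΩ hy)) n
    _ ≤ μ Ω / m * (1 - p) ^ n := by
      gcongr
      exact (ENNReal.le_div_iff_mul_le (Or.inl hm) (Or.inr hμΩ)).2 hcard

theorem measure_not_covered_le_ofReal_exp (hX : ∀ i, Measurable (X i)) (hind : iIndepFun X P)
    (hmap : ∀ i, P.map (X i) = ν) {μ : Measure E} {Ω : Set E} (hΩ : MeasurableSet Ω)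
    (hμΩ : μ Ω ≠ ∞) {d : ℕ} {c₀ r₀ : ℝ} (hc₀ : 0 < c₀)
    (hreg : ∀ x ∈ Ω, ∀ r : ℝ, 0 < r → r ≤ r₀ → ENNReal.ofReal (c₀ * r ^ d) ≤ μ (ball x r ∩ Ω))
    {q : E → ℝ} {qmin : ℝ} (hqmin : 0 < qmin) (hq : ∀ x ∈ Ω, qmin ≤ q x)
    (hν : ν = μ.withDensity fun x => ENNReal.ofReal (q x)) {s : ℝ} (hs : 0 < s) (hsr₀ : s ≤ r₀)
    (n : ℕ) :
    P {ω | ¬ Ω ⊆ ⋃ i ∈ Finset.range n, ball (X i ω) (2 * s)} ≤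
      ENNReal.ofReal ((μ Ω).toReal * qmin * 2 ^ d *
        (Real.exp (-(n * (qmin * c₀ * s ^ d))) / (qmin * c₀ * s ^ d))) := by
  lift s to ℝ≥0 using hs.le
  have hm : 0 < c₀ * (s / 2 : ℝ) ^ d := by positivity
  have hp : ∀ y ∈ Ω, ENNReal.ofReal (qmin * c₀ * s ^ d) ≤ ν (ball y s) := fun y hy =>
    calc ENNReal.ofReal (qmin * c₀ * s ^ d)
        = ENNReal.ofReal qmin * ENNReal.ofReal (c₀ * s ^ d) := by
          rw [mul_assoc, ENNReal.ofReal_mul hqmin.le]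
      _ ≤ ENNReal.ofReal qmin * μ (ball y s ∩ Ω) := by gcongr; exact hreg y hy s hs hsr₀
      _ ≤ ν (ball y s) := hν ▸ mul_measure_inter_le_withDensity_apply hΩ measurableSet_ball
          fun x hx => ENNReal.ofReal_le_ofReal (hq x hx)
  calc P {ω | ¬ Ω ⊆ ⋃ i ∈ Finset.range n, ball (X i ω) (2 * s)}
      ≤ μ Ω / ENNReal.ofReal (c₀ * (s / 2 : ℝ) ^ d) *
          (1 - ENNReal.ofReal (qmin * c₀ * s ^ d)) ^ n :=
        measure_not_covered_le_measure_div_mul hX hind hmap hΩ hμΩ (ENNReal.ofReal_pos.2 hm).ne'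
          (fun x hx => hreg x hx _ (by positivity) (by linarith)) hp n
    _ ≤ ENNReal.ofReal ((μ Ω).toReal / (c₀ * (s / 2 : ℝ) ^ d)) *
          ENNReal.ofReal (Real.exp (-(n * (qmin * c₀ * s ^ d)))) := by
      rw [ENNReal.ofReal_div_of_pos hm, ENNReal.ofReal_toReal hμΩ]
      gcongr
      exact one_sub_pow_le_ofReal_exp (by positivity) le_rfl n
    _ = _ := by
      rw [← ENNReal.ofReal_mul (by positivity)]
      congr 1
      rw [div_pow]
      field_simp

end Covering

theorem Real.exp_neg_nat_mul_div_le {n : ℕ} (hn : 2 ≤ n) {t a : ℝ} (ht : 0 < t) (ha : 0 < a)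
    (h : 3 * Real.log n ≤ n * t ∨ a ≤ t) :
    Real.exp (-(n * t)) / t ≤ 1 / n ^ 2 + Real.exp (-a) ^ n / a := by
  have hn0 : (0 : ℝ) < n := by positivity
  rcases h with hlog | hat
  · have hlog1 : 1 ≤ 3 * Real.log n := by
      have := Real.log_le_log two_pos (by exact_mod_cast hn : (2 : ℝ) ≤ n)
      linarith [Real.log_two_gt_d9]
    have hexp : Real.exp (-(n * t)) ≤ 1 / n ^ 3 :=
      calc Real.exp (-(n * t)) ≤ Real.exp (-(3 * Real.log n)) := Real.exp_le_exp.2 (by linarith)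
        _ = 1 / n ^ 3 := by
          rw [Real.exp_neg, show 3 * Real.log n = Real.log (n ^ 3) by rw [Real.log_pow]; norm_num,
            Real.exp_log (by positivity), one_div]
    have hmain : Real.exp (-(n * t)) / t ≤ 1 / n ^ 2 := by
      rw [div_le_iff₀ ht]
      calc Real.exp (-(n * t)) ≤ 1 / n ^ 2 * (1 / n) := by rwa [one_div_mul_one_div, ← pow_succ]
        _ ≤ 1 / n ^ 2 * t := by gcongr; rw [div_le_iff₀ hn0]; linarith
    linarith [show 0 ≤ Real.exp (-a) ^ n / a by positivity]
  · calc Real.exp (-(n * t)) / t ≤ Real.exp (-(n * a)) / a :=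
          div_le_div₀ (Real.exp_nonneg _) (Real.exp_le_exp.2 (by nlinarith)) ha hat
      _ = Real.exp (-a) ^ n / a := by rw [← Real.exp_nat_mul, mul_neg]
      _ ≤ 1 / n ^ 2 + Real.exp (-a) ^ n / a := le_add_of_nonneg_left (by positivity)

theorem log_le_or_le_of_le_mul_pow {d n : ℕ} {c₀ qmin ρ r₀ : ℝ} (hc₀ : 0 < c₀)
    (hρ : 3 * 2 ^ d / c₀ * Real.log n ≤ n * qmin * ρ ^ d) :
    3 * Real.log n ≤ n * (qmin * c₀ * min (ρ / 2) r₀ ^ d) ∨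
      qmin * c₀ * r₀ ^ d ≤ qmin * c₀ * min (ρ / 2) r₀ ^ d := by
  rcases min_choice (ρ / 2) r₀ with h | h <;> rw [h]
  · left
    calc 3 * Real.log n = c₀ / 2 ^ d * (3 * 2 ^ d / c₀ * Real.log n) := by field_simp
      _ ≤ c₀ / 2 ^ d * (n * qmin * ρ ^ d) := by gcongr
      _ = n * (qmin * c₀ * (ρ / 2) ^ d) := by rw [div_pow]; field_simp
  · exact Or.inr le_rfl

theorem random_covering_general (d : ℕ)
    (Ω : Set (EuclideanSpace ℝ (Fin d))) (hΩopen : IsOpen Ω)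
    (hΩbdd : Bornology.IsBounded Ω)
    -- Lipschitz boundary: lower Ahlfors regularity of small balls centered in Ω
    (c₀ r₀ : ℝ) (hc₀ : 0 < c₀) (hr₀ : 0 < r₀)
    (hreg : ∀ x ∈ Ω, ∀ r : ℝ, 0 < r → r ≤ r₀ →
      ENNReal.ofReal (c₀ * r ^ d) ≤ volume (ball x r ∩ Ω)) :
    ∃ C : ℝ, 0 < C ∧
      ∀ (α : Type) (_ : MeasurableSpace α) (P : Measure α) (_ : IsProbabilityMeasure P)
        (q : EuclideanSpace ℝ (Fin d) → ℝ) (_ : Measurable q)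
        (qmin : ℝ) (_ : 0 < qmin) (_ : ∀ x ∈ Ω, qmin ≤ q x)
        (_ : ∀ x, x ∉ Ω → q x = 0)
        (ν : Measure (EuclideanSpace ℝ (Fin d))) (_ : IsProbabilityMeasure ν)
        (_ : ν = volume.withDensity fun x => ENNReal.ofReal (q x))
        (X : ℕ → α → EuclideanSpace ℝ (Fin d)) (_ : ∀ i, Measurable (X i))
        (_ : iIndepFun X P)
        (_ : ∀ i, Measure.map (X i) P = ν)
        (r : ℕ → ℝ) (_ : ∀ n, 0 < r n),
        (∀ n : ℕ, 1 ≤ n → C * Real.log n ≤ (n : ℝ) * qmin * r n ^ d) →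
        ∀ᵐ ω ∂P, ∃ n₀ : ℕ, ∀ n ≥ n₀,
          Ω ⊆ ⋃ i ∈ Finset.range n, ball (X i ω) (r n) := by
  refine ⟨3 * 2 ^ d / c₀, by positivity, ?_⟩
  intro α _ P _ q _ qmin hqmin hqΩ _ ν _ hν X hX hind hmap r hr hrad
  set s : ℕ → ℝ := fun n => min (r n / 2) r₀
  set a := qmin * c₀ * r₀ ^ d
  set K := (volume Ω).toReal * qmin * 2 ^ d
  have hs : ∀ n, 0 < s n := fun n => lt_min (half_pos (hr n)) hr₀
  have hsum : Summable fun n : ℕ => K * (1 / n ^ 2 + Real.exp (-a) ^ n / a) :=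
    ((Real.summable_one_div_nat_pow.2 one_lt_two).add
      ((summable_geometric_of_lt_one (Real.exp_nonneg _)
        (Real.exp_lt_one_iff.2 (neg_lt_zero.2 (by positivity)))).div_const a)).mul_left K
  have hbound : ∀ n ≥ 2, P {ω | ¬ Ω ⊆ ⋃ i ∈ Finset.range n, ball (X i ω) (r n)} ≤
      ENNReal.ofReal (K * (1 / n ^ 2 + Real.exp (-a) ^ n / a)) := fun n hn =>
    calc P {ω | ¬ Ω ⊆ ⋃ i ∈ Finset.range n, ball (X i ω) (r n)}
        ≤ P {ω | ¬ Ω ⊆ ⋃ i ∈ Finset.range n, ball (X i ω) (2 * s n)} :=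
          measure_mono fun ω hω hcov => hω <| hcov.trans <| Set.iUnion₂_mono fun i _ =>
            ball_subset_ball (by linarith [min_le_left (r n / 2) r₀])
      _ ≤ ENNReal.ofReal (K * (Real.exp (-(n * (qmin * c₀ * s n ^ d))) / (qmin * c₀ * s n ^ d))) :=
          measure_not_covered_le_ofReal_exp hX hind hmap hΩopen.measurableSet
            hΩbdd.measure_lt_top.ne hc₀ hreg hqmin hqΩ hν (hs n) (min_le_right _ _) n
      _ ≤ ENNReal.ofReal (K * (1 / n ^ 2 + Real.exp (-a) ^ n / a)) := by
          have hsn := hs n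
          gcongr
          exact Real.exp_neg_nat_mul_div_le hn (by positivity) (by positivity)
            (log_le_or_le_of_le_mul_pow hc₀ (hrad n (by omega)))
  filter_upwards [ae_eventually_notMem_of_summable hsum hbound] with ω hω
  obtain ⟨n₀, hn₀⟩ := eventually_atTop.1 hω
  exact ⟨n₀, fun n hn => not_not.1 (hn₀ n hn)⟩

/-- Random covering of a bounded open domain `Ω ⊂ ℝ^d` with Lipschitz boundary
(encoded via lower Ahlfors regularity of `Ω`): there is a constant `C > 0`,
depending only on `Ω` and `d`, such that whenever the radii satisfy
`n · q_min · r_n^d ≥ C log n`, almost surely `Ω ⊆ ⋃_{x ∈ X_n} B(x, r_n)` for all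
sufficiently large `n`. -/
theorem random_covering (d : ℕ) (hd : 2 ≤ d)
    (Ω : Set (EuclideanSpace ℝ (Fin d))) (hΩopen : IsOpen Ω)
    (hΩbdd : Bornology.IsBounded Ω) (hΩne : Ω.Nonempty)
    -- Lipschitz boundary: lower Ahlfors regularity of small balls centered in Ω
    (c₀ r₀ : ℝ) (hc₀ : 0 < c₀) (hr₀ : 0 < r₀)
    (hreg : ∀ x ∈ Ω, ∀ r : ℝ, 0 < r → r ≤ r₀ →
      ENNReal.ofReal (c₀ * r ^ d) ≤ volume (ball x r ∩ Ω)) :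
    ∃ C : ℝ, 0 < C ∧
      ∀ (α : Type) (_ : MeasurableSpace α) (P : Measure α) (_ : IsProbabilityMeasure P)
        (q : EuclideanSpace ℝ (Fin d) → ℝ) (_ : Measurable q)
        (qmin : ℝ) (_ : 0 < qmin) (_ : ∀ x ∈ Ω, qmin ≤ q x)
        (_ : ∀ x, x ∉ Ω → q x = 0)
        (ν : Measure (EuclideanSpace ℝ (Fin d))) (_ : IsProbabilityMeasure ν)
        (_ : ν = volume.withDensity fun x => ENNReal.ofReal (q x))
        (X : ℕ → α → EuclideanSpace ℝ (Fin d)) (_ : ∀ i, Measurable (X i))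
        (_ : iIndepFun X P)
        (_ : ∀ i, Measure.map (X i) P = ν)
        (r : ℕ → ℝ) (_ : ∀ n, 0 < r n),
        (∀ n : ℕ, 1 ≤ n → C * Real.log n ≤ (n : ℝ) * qmin * r n ^ d) →
        ∀ᵐ ω ∂P, ∃ n₀ : ℕ, ∀ n ≥ n₀,
          Ω ⊆ ⋃ i ∈ Finset.range n, ball (X i ω) (r n) :=
  random_covering_general d Ω hΩopen hΩbdd c₀ r₀ hc₀ hr₀ hreg
end
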